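/- arXiv:2511.08417 — 2 statements merged into one kernel-verified Lean document; each statement's English description precedes it below -/
import Mathlib

section
/- Let c > 0, η > 0, and ȳ > 0 be real numbers, and define the Itakura–Saito Bregman divergence D(u, v) = -log(u/v) + (u - v)/v for u, v > 0. Then the function y ↦ y·c - log y + (1/η)·D(y, ȳ) on the positive reals has a unique minimizer y⁺, given by y⁺ = (1 + η)·ȳ / (1 + η·c·ȳ); equivalently, y⁺ satisfies 1/y⁺ = (1/(1+η))·(1/ȳ) + (η/(1+η))·c. -/
/-- The Itakura–Saito Bregman divergence induced by `-log`. -/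
noncomputable def itakuraSaito (u v : ℝ) : ℝ :=
  -Real.log (u / v) + (u - v) / v

/-- For `c, η, ȳ > 0`, the function
`y ↦ y·c - log y + (1/η)·D(y, ȳ)` on the positive reals (with `D` the
Itakura–Saito divergence) has the unique minimizer
`y⁺ = (1 + η)·ȳ / (1 + η·c·ȳ)`; equivalently
`1/y⁺ = (1/(1+η))·(1/ȳ) + (η/(1+η))·c`. -/
theorem bregman_prox_step (c η ybar : ℝ) (hc : 0 < c) (hη : 0 < η)
    (hybar : 0 < ybar) :
    0 < (1 + η) * ybar / (1 + η * c * ybar) ∧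
    (∀ y : ℝ, 0 < y → y ≠ (1 + η) * ybar / (1 + η * c * ybar) →
      ((1 + η) * ybar / (1 + η * c * ybar)) * c
          - Real.log ((1 + η) * ybar / (1 + η * c * ybar))
          + (1 / η) * itakuraSaito ((1 + η) * ybar / (1 + η * c * ybar)) ybar
        < y * c - Real.log y + (1 / η) * itakuraSaito y ybar) ∧
    1 / ((1 + η) * ybar / (1 + η * c * ybar))
      = (1 / (1 + η)) * (1 / ybar) + (η / (1 + η)) * c := by
  set yp := (1 + η) * ybar / (1 + η * c * ybar) with hyp_def
  have hD : 0 < 1 + η * c * ybar := by positivity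
  have h1η : (0:ℝ) < 1 + η := by positivity
  have hyp : 0 < yp := by rw [hyp_def]; positivity
  refine ⟨hyp, ?_, ?_⟩
  · intro y hy hne
    have hne1 : y / yp ≠ 1 := by
      exact fun h => hne (by field_simp at h; linarith)
    have key : Real.log (y / yp) < y / yp - 1 :=
      Real.log_lt_sub_one_of_pos (by positivity) hne1
    have hlogy : Real.log (y / ybar) = Real.log y - Real.log ybar :=
      Real.log_div hy.ne' hybar.ne'
    have hlogyp : Real.log (yp / ybar) = Real.log yp - Real.log ybar :=
      Real.log_div hyp.ne' hybar.ne'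
    have hlogq : Real.log (y / yp) = Real.log y - Real.log yp :=
      Real.log_div hy.ne' hyp.ne'
    have hA : (0:ℝ) < c + 1 / (η * ybar) := by positivity
    have hB : (1 + 1/η) = (c + 1/(η*ybar)) * yp := by
      rw [hyp_def]; field_simp; ring
    have step : (1 + 1/η) * (Real.log y - Real.log yp)
        < (c + 1/(η*ybar)) * (y - yp) := by
      calc (1 + 1/η) * (Real.log y - Real.log yp)
          = ((c + 1/(η*ybar)) * yp) * Real.log (y / yp) := by rw [hB, hlogq]
        _ < ((c + 1/(η*ybar)) * yp) * (y / yp - 1) := by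
            exact mul_lt_mul_of_pos_left key (by positivity)
        _ = (c + 1/(η*ybar)) * (y - yp) := by field_simp
    simp only [itakuraSaito, hlogy, hlogyp]
    have expand : (y * c - Real.log y + (1/η) * (-(Real.log y - Real.log ybar) + (y - ybar)/ybar))
        - (yp * c - Real.log yp + (1/η) * (-(Real.log yp - Real.log ybar) + (yp - ybar)/ybar))
        = (c + 1/(η*ybar)) * (y - yp) - (1 + 1/η) * (Real.log y - Real.log yp) := by
      field_simp; ring
    linarith [step, expand]
  · rw [hyp_def]; field_simp
end

section
/- Let c > 0, η > 0, and ȳ > 0 be real numbers, set γ = η/(1+η), and let y⁺ = (1 + η)·ȳ / (1 + η·c·ȳ) be the Bregman proximal update of ȳ. Then γ ∈ (0, 1), and with u = 1/ȳ and u⁺ = 1/y⁺ one has u⁺ = (1 - γ)·u + γ·c. That is, the reciprocal of the Bregman proximal iterate evolves by exactly the exponential-moving-average update of the per-sample normalizer estimators used in SogCLR/FastCLIP. -/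
/-- For `c, η, ȳ > 0`, setting `γ = η/(1+η)` and letting
`y⁺ = (1 + η)·ȳ / (1 + η·c·ȳ)` be the Bregman proximal update of `ȳ`, one has
`γ ∈ (0, 1)` and, with `u = 1/ȳ` and `u⁺ = 1/y⁺`, the exponential moving
average identity `u⁺ = (1 - γ)·u + γ·c`. -/
theorem bregman_prox_is_ema (c η ybar : ℝ) (hc : 0 < c) (hη : 0 < η)
    (hybar : 0 < ybar) :
    η / (1 + η) ∈ Set.Ioo (0 : ℝ) 1 ∧
    1 / ((1 + η) * ybar / (1 + η * c * ybar))
      = (1 - η / (1 + η)) * (1 / ybar) + (η / (1 + η)) * c := by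
  have h1 : (0:ℝ) < 1 + η := by linarith
  constructor
  · constructor
    · positivity
    · rw [div_lt_one h1]; linarith
  · field_simp
    ring
end
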